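/- Let A be a set, let g : A × A → A be a binary operation, and define the binary operation h on A × A by h((x₁,y₁),(x₂,y₂)) = (g(x₁,y₁), g(x₂,y₂)). If (A, g) is a Ramsey algebra, then (A × A, h) is a Ramsey algebra. -/

import Mathlib

open Function Set

universe u v w

/-- Terms of a purely functional first-order language whose function symbols
of arity `n` form the type `F n`, with variables indexed by `ℕ`. -/
inductive Tm (F : ℕ → Type u) : Type u
  | var : ℕ → Tm F
  | func : {n : ℕ} → F n → (Fin n → Tm F) → Tm F

namespace Tm

variable {F : ℕ → Type u} {A : Type v} {β : Type w}

/-- The list of (indices of) variables occurring in a term, from left to right. -/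
def varList : Tm F → List ℕ
  | .var i => [i]
  | .func (n := n) _ ts => (List.finRange n).flatMap fun i => (ts i).varList

/-- A term is *orderly* if the indices of the variables occurring in it,
read from left to right, are strictly increasing. -/
def Orderly (t : Tm F) : Prop := t.varList.Chain' (· < ·)

/-- `TermLT s t` iff the index of the last variable of `s` is less than the
index of the first variable of `t`. -/
def TermLT (s t : Tm F) : Prop :=
  ∃ i j, s.varList.getLast? = some i ∧ t.varList.head? = some j ∧ i < j

/-- An infinite sequence of orderly terms is *admissible* iff it is increasing
with respect to `TermLT`. -/
def Admissible (ts : ℕ → Tm F) : Prop :=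
  (∀ i, (ts i).Orderly) ∧ ∀ i, TermLT (ts i) (ts (i + 1))

/-- `s.subst σ` replaces each variable `vᵢ` in `s` by `σ i`. -/
def subst (σ : ℕ → Tm F) : Tm F → Tm F
  | .var i => σ i
  | .func f ts => .func f fun i => (ts i).subst σ

/-- Interpretation of a term in a structure with underlying set `A` whose
interpretation of the function symbols is `I`, under the assignment `a`. -/
def realize (I : ∀ n, F n → (Fin n → A) → A) (a : ℕ → A) : Tm F → A
  | .var i => a i
  | .func (n := n) f ts => I n f fun i => (ts i).realize I a

end Tm

section General

variable {F : ℕ → Type u} {A : Type v} {β : Type w}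

/-- `b` is a reduction of `a` (with respect to the algebra `(A, I)`). -/
def SeqReduction (I : ∀ n, F n → (Fin n → A) → A) (b a : ℕ → A) : Prop :=
  ∃ ts : ℕ → Tm F, Tm.Admissible ts ∧ ∀ i, b i = (ts i).realize I a

/-- The set of finite reductions of `a`. -/
def FR (I : ∀ n, F n → (Fin n → A) → A) (a : ℕ → A) : Set A :=
  { x | ∃ t : Tm F, t.Orderly ∧ x = t.realize I a }

/-- `(A, I)` is a Ramsey algebra. -/
def RamseyAlg (I : ∀ n, F n → (Fin n → A) → A) : Prop :=
  ∀ (a : ℕ → A) (X : Set A),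
    ∃ b, SeqReduction I b a ∧ (FR I b ⊆ X ∨ FR I b ∩ X = ∅)

/-- `(A, I)` is Ramsey below `a`. -/
def RamseyBelow (I : ∀ n, F n → (Fin n → A) → A) (a : ℕ → A) : Prop :=
  ∀ b, SeqReduction I b a → ∀ X : Set A,
    ∃ c, SeqReduction I c b ∧ (FR I c ⊆ X ∨ FR I c ∩ X = ∅)

/-- An increasing tuple `t₁ < t₂ < ⋯ < tₙ` of orderly terms. -/
def OrdTuple {n : ℕ} (t : Fin n → Tm F) : Prop :=
  (∀ i, (t i).Orderly) ∧ ∀ i j : Fin n, i < j → Tm.TermLT (t i) (t j)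

/-- `𝒜` (as a function on orderly terms) is an orderly algebra. -/
def IsOrderlyAlg (𝒜 : Tm F → β) : Prop :=
  ∀ (n : ℕ) (f : F n) (t t' : Fin n → Tm F), OrdTuple t → OrdTuple t' →
    (∀ k, 𝒜 (t k) = 𝒜 (t' k)) → 𝒜 (.func f t) = 𝒜 (.func f t')

/-- The universe of an orderly algebra: its range on orderly terms. -/
def OAUniv (𝒜 : Tm F → β) : Set β := 𝒜 '' { t | t.Orderly }

/-- `ℬ` is a reduction of the orderly algebra `𝒜` (as functions on orderly terms). -/
def OAReduction (ℬ 𝒜 : Tm F → β) : Prop :=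
  ∃ ts : ℕ → Tm F, Tm.Admissible ts ∧ ∀ s : Tm F, s.Orderly → ℬ s = 𝒜 (s.subst ts)

/-- `ℬ` is homogeneous for `X`. -/
def Homog (ℬ : Tm F → β) (X : Set β) : Prop :=
  OAUniv ℬ ⊆ X ∨ OAUniv ℬ ∩ X = ∅

/-- An orderly algebra is weakly Ramsey. -/
def WeaklyRamseyOA (𝒜 : Tm F → β) : Prop :=
  ∀ X ⊆ OAUniv 𝒜, ∃ ℬ, OAReduction ℬ 𝒜 ∧ Homog ℬ X

/-- An orderly algebra is Ramsey. -/
def RamseyOA (𝒜 : Tm F → β) : Prop :=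
  ∀ ℬ, OAReduction ℬ 𝒜 → ∀ X ⊆ OAUniv 𝒜, ∃ 𝒞, OAReduction 𝒞 ℬ ∧ Homog 𝒞 X

/-- The orderly algebra induced from the algebra `(A, I)` by the sequence `a`. -/
def inducedOA (I : ∀ n, F n → (Fin n → A) → A) (a : ℕ → A) : Tm F → A :=
  fun t => t.realize I a

/-- `[FR(c)]ⁿ_<` : increasing `n`-tuples of finite reductions of `c`. -/
def FRtuple (I : ∀ n, F n → (Fin n → A) → A) (n : ℕ) (c : ℕ → A) : Set (Fin n → A) :=
  { x | ∃ t : Fin n → Tm F, OrdTuple t ∧ ∀ i, x i = (t i).realize I c }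

/-- `‖𝒞‖ⁿ_<` for an orderly algebra `𝒞`. -/
def OATuple (n : ℕ) (𝒞 : Tm F → β) : Set (Fin n → β) :=
  { x | ∃ t : Fin n → Tm F, OrdTuple t ∧ ∀ i, x i = 𝒞 (t i) }

/-- The basic set `[n, a]` of the preorder with approximations `(ᵂA, ≤)`. -/
def Approx (I : ∀ n, F n → (Fin n → A) → A) (n : ℕ) (a : ℕ → A) : Set (ℕ → A) :=
  { b | SeqReduction I b a ∧ ∀ i < n, b i = a i }

/-- The natural topology on `ᵂA`, generated by the sets `[n, a]`. -/
def natTop (I : ∀ n, F n → (Fin n → A) → A) : TopologicalSpace (ℕ → A) :=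
  TopologicalSpace.generateFrom { S | ∃ n a, S = Approx I n a }

/-- A subset `X ⊆ ᵂA` is Ramsey. -/
def RamseySet (I : ∀ n, F n → (Fin n → A) → A) (X : Set (ℕ → A)) : Prop :=
  ∀ (n : ℕ) (a : ℕ → A), ∃ b ∈ Approx I n a,
    Approx I n b ⊆ X ∨ Approx I n b ∩ X = ∅

/-- `X` has the property of Baire in the natural topology:
its symmetric difference with some open set is meager. -/
def HasBaireProperty (I : ∀ n, F n → (Fin n → A) → A) (X : Set (ℕ → A)) : Prop :=
  ∃ U : Set (ℕ → A), @IsOpen _ (natTop I) U ∧ @IsMeagre _ (natTop I) (symmDiff X U)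

end General

/-- The language with a single binary function symbol. -/
inductive BinF : ℕ → Type
  | f : BinF 2

/-- Application of the binary function symbol: the term `f s t`. -/
def fapp (s t : Tm BinF) : Tm BinF := .func BinF.f ![s, t]

/-- The interpretation of the single binary function symbol by a binary
operation `g` on `A`. -/
def binI {A : Type v} (g : A → A → A) : ∀ n, BinF n → (Fin n → A) → A
  | _, BinF.f, args => g (args 0) (args 1)

/-- The pair `(tˣ, tʸ)`: `(vᵢˣ, vᵢʸ) = (v_{2i}, v_{2i+1})` and
`((f s t)ˣ, (f s t)ʸ) = (f sˣ sʸ, f tˣ tʸ)`. -/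
def xyPair : Tm BinF → Tm BinF × Tm BinF
  | .var i => (.var (2 * i), .var (2 * i + 1))
  | .func BinF.f ts =>
      (fapp (xyPair (ts 0)).1 (xyPair (ts 0)).2, fapp (xyPair (ts 1)).1 (xyPair (ts 1)).2)

/-- The orderly algebra `♯𝒜`, `♯𝒜(t) = (𝒜(tˣ), 𝒜(tʸ))`. -/
def sharpOA {β : Type w} (𝒜 : Tm BinF → β) : Tm BinF → β × β :=
  fun t => (𝒜 (xyPair t).1, 𝒜 (xyPair t).2)

/-!
Put `d = g ∘ a`. In `(A × A, h)` a term `f s t` evaluates to the pair of the values of `s` and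
`t` in `(A, g)` at `d`. Hence a reduction `d'` of `d` yields the reduction `b` of `a` with
`bᵢ = (d'₂ᵢ, d'₂ᵢ₊₁)`, whose finite reductions are pairs `(p(d'), q(d'))` of orderly terms with
every variable of `p` before every variable of `q`. It therefore suffices to make such pairs
homogeneous for `X`.

A fusion argument gives a reduction `d'` of `d` such that for every `n` and every `x` built from
`d'₀, …, d'ₙ`, whether `(x, y) ∈ X` does not depend on `y` built from `d'ₙ₊₁, d'ₙ₊₂, …`: at stage
`n` there are finitely many such `x`, each handled by one application of the Ramsey property to
the tail, and the first `n + 1` terms are frozen from then on. Colouring `x` by that answer and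
applying the Ramsey property once more makes all pairs homogeneous.
-/

namespace Tm

section General

variable {F : ℕ → Type u} {A : Type v}

@[simp]
theorem varList_var (i : ℕ) : (var i : Tm F).varList = [i] := rfl

theorem orderly_iff_pairwise {t : Tm F} : t.Orderly ↔ t.varList.Pairwise (· < ·) :=
  List.isChain_iff_pairwise

theorem orderly_var (i : ℕ) : (var i : Tm F).Orderly := by
  simp [orderly_iff_pairwise]

theorem varList_subst (σ : ℕ → Tm F) (t : Tm F) :
    (t.subst σ).varList = t.varList.flatMap fun i => (σ i).varList := by
  induction t with
  | var i => simp [subst]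
  | func f ts ih =>
    simp only [subst, varList, List.flatMap_assoc]
    exact List.flatMap_congr fun i _ => ih i

theorem varList_subst_var (f : ℕ → ℕ) (t : Tm F) :
    (t.subst fun i => var (f i)).varList = t.varList.map f := by
  rw [varList_subst]
  induction t.varList <;> simp_all

theorem realize_subst (I : ∀ n, F n → (Fin n → A) → A) (a : ℕ → A) (σ : ℕ → Tm F)
    (t : Tm F) : (t.subst σ).realize I a = t.realize I fun i => (σ i).realize I a := by
  induction t with
  | var i => rfl
  | func f ts ih => exact congrArg (I _ f) (funext ih)

theorem realize_congr (I : ∀ n, F n → (Fin n → A) → A) {a b : ℕ → A} {t : Tm F}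
    (h : ∀ i ∈ t.varList, a i = b i) : t.realize I a = t.realize I b := by
  induction t with
  | var i => exact h i (by simp)
  | func f ts ih =>
    refine congrArg (I _ f) (funext fun i => ih i fun j hj => h j ?_)
    simp only [varList, List.mem_flatMap]
    exact ⟨i, List.mem_finRange i, hj⟩

theorem realize_eq_realize_subst (I : ∀ n, F n → (Fin n → A) → A) {σ : ℕ → Tm F}
    {a b : ℕ → A} (hb : ∀ i, b i = (σ i).realize I a) (t : Tm F) :
    t.realize I b = (t.subst σ).realize I a := by
  rw [realize_subst]
  exact realize_congr I fun i _ => hb i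

def VarsLT (s t : Tm F) : Prop := ∀ x ∈ s.varList, ∀ y ∈ t.varList, x < y

theorem varsLT_of_termLT {s t : Tm F} (hs : s.Orderly) (ht : t.Orderly) (h : s.TermLT t) :
    s.VarsLT t := by
  obtain ⟨i, j, hi, hj, hij⟩ := h
  intro x hx y hy
  rw [List.getLast?_eq_some_getLast (List.ne_nil_of_mem hx), Option.some_inj] at hi
  rw [List.head?_eq_some_head (List.ne_nil_of_mem hy), Option.some_inj] at hj
  have hxi := ((orderly_iff_pairwise.1 hs).imp le_of_lt).rel_getLast hx
  have hjy := ((orderly_iff_pairwise.1 ht).imp le_of_lt).rel_head hy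
  omega

theorem admissible_var {f : ℕ → ℕ} (hf : StrictMono f) :
    Admissible fun i => (var (f i) : Tm F) :=
  ⟨fun _ => orderly_var _, fun i => ⟨f i, f (i + 1), rfl, rfl, hf i.lt_succ_self⟩⟩

theorem Orderly.subst_var {t : Tm F} (ht : t.Orderly) {f : ℕ → ℕ}
    (hf : ∀ x ∈ t.varList, ∀ y ∈ t.varList, x < y → f x < f y) :
    (t.subst fun i => var (f i)).Orderly := by
  rw [orderly_iff_pairwise, varList_subst_var, List.pairwise_map]
  exact (orderly_iff_pairwise.1 ht).imp_of_mem (hf _ · _ ·)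

end General


section Binary

theorem func_eq_fapp (ts : Fin 2 → Tm BinF) : func BinF.f ts = fapp (ts 0) (ts 1) := by
  unfold fapp
  congr 1
  funext i
  fin_cases i <;> rfl

theorem varList_fapp (s t : Tm BinF) : (fapp s t).varList = s.varList ++ t.varList := by
  simp [fapp, varList, List.finRange_succ]

theorem varList_ne_nil (t : Tm BinF) : t.varList ≠ [] := by
  induction t with
  | var i => simp
  | func c ts ih =>
    cases c
    rw [func_eq_fapp, varList_fapp]
    exact List.append_ne_nil_of_left_ne_nil (ih 0) _

theorem orderly_fapp_iff {s t : Tm BinF} :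
    (fapp s t).Orderly ↔ s.Orderly ∧ t.Orderly ∧ s.VarsLT t := by
  simp only [orderly_iff_pairwise, varList_fapp, List.pairwise_append, VarsLT]

theorem termLT_of_varsLT {s t : Tm BinF} (h : s.VarsLT t) : s.TermLT t :=
  ⟨_, _, List.getLast?_eq_some_getLast (varList_ne_nil s),
    List.head?_eq_some_head (varList_ne_nil t),
    h _ (List.getLast_mem _) _ (List.head_mem _)⟩

theorem VarsLT.trans {s t r : Tm BinF} (hst : s.VarsLT t) (htr : t.VarsLT r) : s.VarsLT r := by
  obtain ⟨y, hy⟩ := List.exists_mem_of_ne_nil _ (varList_ne_nil t)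
  exact fun x hx z hz => (hst x hx y hy).trans (htr y hy z hz)

theorem VarsLT.exists_separating {s t : Tm BinF} (h : s.VarsLT t) :
    ∃ m, (∀ x ∈ s.varList, x ≤ m) ∧ ∀ y ∈ t.varList, m < y := by
  have hne : s.varList.toFinset.Nonempty := by simp [varList_ne_nil]
  refine ⟨s.varList.toFinset.max' hne, fun x hx => Finset.le_max' _ x (List.mem_toFinset.2 hx),
    fun y hy => h _ ?_ y hy⟩
  simpa using Finset.max'_mem _ hne

theorem admissible_of_varsLT {u : ℕ → Tm BinF} (ho : ∀ i, (u i).Orderly)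
    (hlt : ∀ i, (u i).VarsLT (u (i + 1))) : Admissible u :=
  ⟨ho, fun i => termLT_of_varsLT (hlt i)⟩

theorem Admissible.varsLT {u : ℕ → Tm BinF} (hu : Admissible u) {i j : ℕ} (hij : i < j) :
    (u i).VarsLT (u j) := by
  induction j, hij using Nat.le_induction with
  | base => exact varsLT_of_termLT (hu.1 _) (hu.1 _) (hu.2 i)
  | succ j _ ih => exact ih.trans (varsLT_of_termLT (hu.1 _) (hu.1 _) (hu.2 j))

theorem Orderly.subst {t : Tm BinF} {u : ℕ → Tm BinF} (ht : t.Orderly) (hu : Admissible u) :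
    (t.subst u).Orderly := by
  rw [orderly_iff_pairwise, varList_subst, List.pairwise_flatMap]
  exact ⟨fun i _ => orderly_iff_pairwise.1 (hu.1 i),
    (orderly_iff_pairwise.1 ht).imp fun hij => hu.varsLT hij⟩

theorem VarsLT.subst {s t : Tm BinF} {u : ℕ → Tm BinF} (h : s.VarsLT t) (hu : Admissible u) :
    (s.subst u).VarsLT (t.subst u) := by
  intro x hx y hy
  rw [varList_subst, List.mem_flatMap] at hx hy
  obtain ⟨i, hi, hxi⟩ := hx
  obtain ⟨j, hj, hyj⟩ := hy
  exact hu.varsLT (h i hi j hj) x hxi y hyj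

theorem Admissible.subst {v u : ℕ → Tm BinF} (hv : Admissible v) (hu : Admissible u) :
    Admissible fun i => (v i).subst u :=
  admissible_of_varsLT (fun i => (hv.1 i).subst hu) fun i =>
    (varsLT_of_termLT (hv.1 i) (hv.1 (i + 1)) (hv.2 i)).subst hu

def pairUp (u : ℕ → Tm BinF) (i : ℕ) : Tm BinF := fapp (u (2 * i)) (u (2 * i + 1))

theorem Admissible.pairUp {u : ℕ → Tm BinF} (hu : Admissible u) : Admissible (pairUp u) :=
  admissible_of_varsLT (fun i => orderly_fapp_iff.2 ⟨hu.1 _, hu.1 _, hu.varsLT (by omega)⟩)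
    fun i x hx y hy => by
      simp only [Tm.pairUp, varList_fapp, List.mem_append] at hx hy
      rcases hx with hx | hx <;> rcases hy with hy | hy <;>
        exact hu.varsLT (by omega) x hx y hy

def prependVars (n : ℕ) (v : ℕ → Tm BinF) (j : ℕ) : Tm BinF :=
  if j ≤ n then var j else (v (j - (n + 1))).subst fun i => var (i + (n + 1))

theorem prependVars_of_le {n j : ℕ} (v : ℕ → Tm BinF) (h : j ≤ n) : prependVars n v j = var j :=
  if_pos h

theorem prependVars_add (n : ℕ) (v : ℕ → Tm BinF) (k : ℕ) :
    prependVars n v (k + (n + 1)) = (v k).subst fun i => var (i + (n + 1)) := by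
  simp only [prependVars, if_neg (by omega : ¬k + (n + 1) ≤ n), Nat.add_sub_cancel]

theorem Admissible.prependVars {v : ℕ → Tm BinF} (hv : Admissible v) (n : ℕ) :
    Admissible (prependVars n v) := by
  have hshift : Admissible fun k => (v k).subst fun i => var (i + (n + 1)) :=
    hv.subst (admissible_var (strictMono_id.add_const _))
  refine admissible_of_varsLT (fun j => ?_) (fun j => ?_)
  · unfold Tm.prependVars
    split_ifs
    exacts [orderly_var j, hshift.1 _]
  rcases lt_trichotomy j n with hj | rfl | hj
  · rw [prependVars_of_le v hj.le, prependVars_of_le v hj]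
    simp [VarsLT]
  · rw [prependVars_of_le v le_rfl, ← zero_add (j + 1), prependVars_add]
    simp only [VarsLT, varList_subst_var, varList_var, List.mem_singleton, List.mem_map]
    omega
  · obtain ⟨k, rfl⟩ : ∃ k, j = k + (n + 1) := ⟨j - (n + 1), by omega⟩
    rw [prependVars_add, show k + (n + 1) + 1 = k + 1 + (n + 1) by omega, prependVars_add]
    exact hshift.varsLT k.lt_succ_self

theorem finite_setOf_length_le (k n : ℕ) :
    {t : Tm BinF | t.varList.length ≤ k ∧ ∀ v ∈ t.varList, v ≤ n}.Finite := by
  induction k with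
  | zero => simp [varList_ne_nil]
  | succ k ih =>
    refine (((Set.finite_Iic n).image var).union (ih.image2 fapp ih)).subset ?_
    rintro (i | ⟨c, ts⟩) ⟨hlen, hbound⟩
    · exact Or.inl ⟨i, hbound i (by simp), rfl⟩
    cases c
    rw [func_eq_fapp] at hlen hbound ⊢
    rw [varList_fapp, List.length_append] at hlen
    have h0 := List.length_pos_iff.2 (varList_ne_nil (ts 0))
    have h1 := List.length_pos_iff.2 (varList_ne_nil (ts 1))
    refine Or.inr ⟨ts 0, ⟨by omega, fun v hv => hbound v ?_⟩, ts 1,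
      ⟨by omega, fun v hv => hbound v ?_⟩, rfl⟩ <;> simp [varList_fapp, hv]

end Binary

theorem Orderly.length_varList_le {F : ℕ → Type u} {t : Tm F} (ht : t.Orderly) {n : ℕ}
    (hn : ∀ v ∈ t.varList, v ≤ n) : t.varList.length ≤ n + 1 := by
  have hnd : t.varList.Nodup := (orderly_iff_pairwise.1 ht).imp ne_of_lt
  calc t.varList.length = t.varList.toFinset.card := (List.toFinset_card_of_nodup hnd).symm
    _ ≤ (Finset.range (n + 1)).card :=
      Finset.card_le_card fun x hx => by
        have := hn x (List.mem_toFinset.1 hx)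
        simp only [Finset.mem_range]
        omega
    _ = n + 1 := Finset.card_range _

theorem finite_setOf_orderly_le (n : ℕ) :
    {t : Tm BinF | t.Orderly ∧ ∀ v ∈ t.varList, v ≤ n}.Finite :=
  (finite_setOf_length_le (n + 1) n).subset fun _ ⟨ht, hn⟩ => ⟨ht.length_varList_le hn, hn⟩

end Tm

section Reduction

variable {F : ℕ → Type u} {A : Type v} {I : ∀ n, F n → (Fin n → A) → A}

theorem SeqReduction.refl (a : ℕ → A) : SeqReduction I a a :=
  ⟨fun i => .var i, Tm.admissible_var strictMono_id, fun _ => rfl⟩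

theorem realize_mem_FR_shift {q : Tm F} (hq : q.Orderly) {k : ℕ} (hk : ∀ v ∈ q.varList, k ≤ v)
    (c : ℕ → A) : q.realize I c ∈ FR I fun i => c (i + k) := by
  refine ⟨q.subst fun i => .var (i - k), hq.subst_var fun x hx y hy hxy => ?_, ?_⟩
  · have := hk x hx
    omega
  · rw [Tm.realize_subst]
    refine Tm.realize_congr I fun i hi => ?_
    have := hk i hi
    simp only [Tm.realize, Nat.sub_add_cancel this]

end Reduction

section BinaryReduction

variable {A : Type v} {I : ∀ n, BinF n → (Fin n → A) → A}

theorem SeqReduction.trans {a b c : ℕ → A} (hcb : SeqReduction I c b)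
    (hba : SeqReduction I b a) : SeqReduction I c a := by
  obtain ⟨t, ht, hct⟩ := hcb
  obtain ⟨u, hu, hbu⟩ := hba
  exact ⟨_, ht.subst hu, fun i => (hct i).trans (Tm.realize_eq_realize_subst I hbu _)⟩

theorem SeqReduction.FR_subset {a b : ℕ → A} (h : SeqReduction I b a) : FR I b ⊆ FR I a := by
  rintro _ ⟨t, ht, rfl⟩
  obtain ⟨u, hu, hbu⟩ := h
  exact ⟨_, ht.subst hu, Tm.realize_eq_realize_subst I hbu t⟩

end BinaryReduction

theorem mem_iff_of_homogeneous {α : Type*} {T Y : Set α} (h : T ⊆ Y ∨ T ∩ Y = ∅) {y y' : α}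
    (hy : y ∈ T) (hy' : y' ∈ T) : y ∈ Y ↔ y' ∈ Y := by
  rcases h with h | h
  · exact iff_of_true (h hy) (h hy')
  · exact iff_of_false (fun hY => h.subset ⟨hy, hY⟩) fun hY => h.subset ⟨hy', hY⟩

namespace Tm

def IsFusionSeq (s : ℕ → ℕ → Tm BinF) : Prop :=
  ∀ n, ∃ u, Admissible u ∧ (∀ i ≤ n, u i = var i) ∧ s (n + 1) = fun j => (u j).subst (s n)

variable {s : ℕ → ℕ → Tm BinF}

theorem IsFusionSeq.admissible (hs : IsFusionSeq s) (h0 : Admissible (s 0)) (n : ℕ) :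
    Admissible (s n) := by
  induction n with
  | zero => exact h0
  | succ n ih =>
    obtain ⟨u, hu, -, hsu⟩ := hs n
    rw [hsu]
    exact hu.subst ih

theorem IsFusionSeq.apply_succ_of_le (hs : IsFusionSeq s) {n j : ℕ} (hj : j ≤ n) :
    s (n + 1) j = s n j := by
  obtain ⟨u, -, hfix, hsu⟩ := hs n
  rw [hsu]
  exact congrArg (subst (s n)) (hfix j hj)

theorem IsFusionSeq.apply_of_le (hs : IsFusionSeq s) {m j : ℕ} (hjm : j ≤ m) : s m j = s j j := by
  induction m, hjm using Nat.le_induction with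
  | base => rfl
  | succ m hjm ih => rw [hs.apply_succ_of_le hjm, ih]

theorem IsFusionSeq.admissible_diag (hs : IsFusionSeq s) (h0 : Admissible (s 0)) :
    Admissible fun j => s j j :=
  ⟨fun j => (hs.admissible h0 j).1 j, fun j => by
    dsimp only
    rw [← hs.apply_succ_of_le le_rfl]
    exact (hs.admissible h0 (j + 1)).2 j⟩

end Tm

section Fusion

variable {A : Type v} {I : ∀ n, BinF n → (Fin n → A) → A}

theorem RamseyAlg.exists_homogeneous_of_finite (hg : RamseyAlg I) {ι : Type*} {S : Set ι}
    (hS : S.Finite) (Y : ι → Set A) (d : ℕ → A) :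
    ∃ e, SeqReduction I e d ∧ ∀ i ∈ S, FR I e ⊆ Y i ∨ FR I e ∩ Y i = ∅ := by
  induction S, hS using Set.Finite.induction_on generalizing d with
  | empty => exact ⟨d, .refl d, by simp⟩
  | @insert i S _ _ ih =>
    obtain ⟨e₁, he₁, hS⟩ := ih d
    obtain ⟨e, he, hi⟩ := hg e₁ (Y i)
    refine ⟨e, he.trans he₁, Set.forall_mem_insert.2 ⟨hi, fun j hj => ?_⟩⟩
    exact (hS j hj).imp he.FR_subset.trans
      (Set.subset_eq_empty (Set.inter_subset_inter_left _ he.FR_subset))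

def TailHomogeneous (I : ∀ n, BinF n → (Fin n → A) → A) (X : Set (A × A)) (n : ℕ)
    (c : ℕ → A) : Prop :=
  ∀ p q q' : Tm BinF, p.Orderly → q.Orderly → q'.Orderly → (∀ v ∈ p.varList, v ≤ n) →
    (∀ v ∈ q.varList, n < v) → (∀ v ∈ q'.varList, n < v) →
    ((p.realize I c, q.realize I c) ∈ X ↔ (p.realize I c, q'.realize I c) ∈ X)

variable {X : Set (A × A)} {n : ℕ}

theorem TailHomogeneous.realize_of_fixing {c : ℕ → A} (hc : TailHomogeneous I X n c)
    {u : ℕ → Tm BinF} (hu : Tm.Admissible u) (hfix : ∀ i ≤ n, u i = .var i) :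
    TailHomogeneous I X n fun j => (u j).realize I c := by
  have hgt : ∀ q : Tm BinF, (∀ v ∈ q.varList, n < v) → ∀ v ∈ (q.subst u).varList, n < v := by
    intro q hq v hv
    rw [Tm.varList_subst, List.mem_flatMap] at hv
    obtain ⟨j, hj, hvj⟩ := hv
    exact hu.varsLT (hq j hj) n (by simp [hfix n le_rfl]) v hvj
  intro p q q' hp hq hq' hpn hqn hq'n
  have hp' : p.realize I (fun j => (u j).realize I c) = p.realize I c :=
    Tm.realize_congr I fun i hi => by rw [hfix i (hpn i hi)]; rfl
  rw [hp', ← Tm.realize_subst, ← Tm.realize_subst]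
  exact hc p _ _ hp (hq.subst hu) (hq'.subst hu) hpn (hgt q hqn) (hgt q' hq'n)

theorem TailHomogeneous.of_forall_agree {c : ℕ → A}
    (h : ∀ M, ∃ c', TailHomogeneous I X n c' ∧ ∀ j ≤ M, c' j = c j) :
    TailHomogeneous I X n c := by
  intro p q q' hp hq hq' hpn hqn hq'n
  let l := p.varList ++ q.varList ++ q'.varList
  obtain ⟨c', hc', hagree⟩ := h l.sum
  have hr : ∀ t : Tm BinF, (∀ v ∈ t.varList, v ∈ l) → t.realize I c = t.realize I c' :=
    fun t ht => Tm.realize_congr I fun i hi => (hagree i (List.le_sum_of_mem (ht i hi))).symm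
  rw [hr p (by simp +contextual [l]), hr q (by simp +contextual [l]),
    hr q' (by simp +contextual [l])]
  exact hc' p q q' hp hq hq' hpn hqn hq'n

theorem RamseyAlg.exists_fixing_tailHomogeneous (hg : RamseyAlg I) (X : Set (A × A))
    (c : ℕ → A) (n : ℕ) :
    ∃ u : ℕ → Tm BinF, Tm.Admissible u ∧ (∀ i ≤ n, u i = .var i) ∧
      TailHomogeneous I X n fun j => (u j).realize I c := by
  obtain ⟨e, ⟨v, hv, hev⟩, he⟩ :=
    hg.exists_homogeneous_of_finite ((Tm.finite_setOf_orderly_le n).image fun p => p.realize I c)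
      (fun x => {y | (x, y) ∈ X}) fun k => c (k + (n + 1))
  refine ⟨Tm.prependVars n v, hv.prependVars n, fun i hi => Tm.prependVars_of_le v hi, ?_⟩
  set c' := fun j => (Tm.prependVars n v j).realize I c
  have htail : (fun k => c' (k + (n + 1))) = e := funext fun k => by
    simp only [c', Tm.prependVars_add, Tm.realize_subst, hev]
    rfl
  intro p q q' hp hq hq' hpn hqn hq'n
  have hp' : p.realize I c' = p.realize I c :=
    Tm.realize_congr I fun i hi => by simp only [c', Tm.prependVars_of_le v (hpn i hi)]; rfl
  rw [hp']
  refine mem_iff_of_homogeneous (he _ ⟨p, ⟨hp, hpn⟩, rfl⟩) ?_ ?_ <;> rw [← htail]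
  · exact realize_mem_FR_shift hq hqn c'
  · exact realize_mem_FR_shift hq' hq'n c'

theorem RamseyAlg.exists_forall_tailHomogeneous (hg : RamseyAlg I) (X : Set (A × A))
    (c : ℕ → A) : ∃ d, SeqReduction I d c ∧ ∀ n, TailHomogeneous I X n d := by
  choose u hu hfix hhom using fun n (s : ℕ → Tm BinF) =>
    hg.exists_fixing_tailHomogeneous X (fun j => (s j).realize I c) n
  let s : ℕ → ℕ → Tm BinF := fun n => Nat.rec (fun i => .var i) (fun n s j => (u n s j).subst s) n
  have hs : Tm.IsFusionSeq s := fun n => ⟨u n (s n), hu _ _, hfix _ _, rfl⟩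
  let sc : ℕ → ℕ → A := fun m j => (s m j).realize I c
  have hsc : ∀ m, sc (m + 1) = fun j => (u m (s m) j).realize I (sc m) :=
    fun m => funext fun j => Tm.realize_subst I c (s m) (u m (s m) j)
  have hstage : ∀ n m, n + 1 ≤ m → TailHomogeneous I X n (sc m) := by
    intro n m hnm
    induction m, hnm using Nat.le_induction with
    | base => rw [hsc]; exact hhom n (s n)
    | succ m hnm ih =>
      rw [hsc]
      exact ih.realize_of_fixing (hu m (s m)) fun i hi => hfix m (s m) i (by omega)
  refine ⟨fun j => sc j j, ⟨_, hs.admissible_diag (Tm.admissible_var strictMono_id),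
    fun j => rfl⟩, fun n => TailHomogeneous.of_forall_agree fun M =>
      ⟨sc (max M (n + 1)), hstage n _ (le_max_right _ _), fun j hj => ?_⟩⟩
  simp only [sc, hs.apply_of_le (le_max_of_le_left hj)]

end Fusion

section Pairs

variable {A : Type v} {I : ∀ n, BinF n → (Fin n → A) → A}

/-- The paper's `[FR(c)]²_<`, with pairs in place of `Fin 2`-tuples. -/
def FRPairs (I : ∀ n, BinF n → (Fin n → A) → A) (c : ℕ → A) : Set (A × A) :=
  {z | ∃ p q : Tm BinF, p.Orderly ∧ q.Orderly ∧ p.VarsLT q ∧ z = (p.realize I c, q.realize I c)}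

theorem RamseyAlg.exists_FRPairs_homogeneous_of_tailHomogeneous (hg : RamseyAlg I)
    {X : Set (A × A)} {d : ℕ → A} (hd : ∀ n, TailHomogeneous I X n d) :
    ∃ e, SeqReduction I e d ∧ (FRPairs I e ⊆ X ∨ FRPairs I e ∩ X = ∅) := by
  -- colour `x` by the answer that `TailHomogeneous` gives at a level where `x` is built
  let Y : Set A := {x | ∃ n p, Tm.Orderly p ∧ (∀ v ∈ p.varList, v ≤ n) ∧
    x = p.realize I d ∧ (x, d (n + 1)) ∈ X}
  obtain ⟨e, ⟨w, hw, hew⟩, hY⟩ := hg d Y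
  have hsplit : ∀ z ∈ FRPairs I e, ∃ m P Q, Tm.Orderly P ∧ Tm.Orderly Q ∧
      (∀ v ∈ P.varList, v ≤ m) ∧ (∀ v ∈ Q.varList, m < v) ∧ z.1 ∈ FR I e ∧
      z = (P.realize I d, Q.realize I d) := by
    rintro _ ⟨p, q, hp, hq, hpq, rfl⟩
    obtain ⟨m, hPm, hQm⟩ := (hpq.subst hw).exists_separating
    exact ⟨m, _, _, hp.subst hw, hq.subst hw, hPm, hQm, ⟨p, hp, rfl⟩,
      by rw [Tm.realize_eq_realize_subst I hew p, Tm.realize_eq_realize_subst I hew q]⟩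
  refine ⟨e, ⟨w, hw, hew⟩, hY.imp (fun hsub z hz => ?_) fun hdisj => ?_⟩
  · obtain ⟨m, P, Q, hP, hQ, hPm, hQm, hz1, rfl⟩ := hsplit z hz
    obtain ⟨n, p, hp, hpn, hpP, hpX⟩ := hsub hz1
    dsimp only at hpP hpX
    -- pass from `d (n + 1)` to `Q` through a variable beyond both `n` and `m`
    have hL : (P.realize I d, d (max n m + 1)) ∈ X := by
      rw [hpP] at hpX ⊢
      exact (hd n p (.var (n + 1)) (.var _) hp (Tm.orderly_var _) (Tm.orderly_var _) hpn
        (by simp) (by simp)).1 hpX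
    exact (hd m P (.var _) Q hP (Tm.orderly_var _) hQ hPm (by simp) hQm).1 hL
  · rw [Set.eq_empty_iff_forall_notMem]
    rintro z ⟨hz, hzX⟩
    obtain ⟨m, P, Q, hP, hQ, hPm, hQm, hz1, rfl⟩ := hsplit z hz
    refine hdisj.subset ⟨hz1, m, P, hP, hPm, rfl, ?_⟩
    exact (hd m P Q (.var (m + 1)) hP hQ (Tm.orderly_var _) hPm hQm (by simp)).1 hzX

theorem RamseyAlg.exists_FRPairs_homogeneous (hg : RamseyAlg I) (X : Set (A × A)) (c : ℕ → A) :
    ∃ d, SeqReduction I d c ∧ (FRPairs I d ⊆ X ∨ FRPairs I d ∩ X = ∅) := by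
  obtain ⟨d, hdc, hd⟩ := hg.exists_forall_tailHomogeneous X c
  obtain ⟨e, hed, he⟩ := hg.exists_FRPairs_homogeneous_of_tailHomogeneous hd
  exact ⟨e, hed.trans hdc, he⟩

end Pairs

section Product

variable {A : Type v} (g : A × A → A)

@[simp]
theorem realize_fapp_binI {B : Type*} (op : B → B → B) (c : ℕ → B) (s t : Tm BinF) :
    (fapp s t).realize (binI op) c = op (s.realize (binI op) c) (t.realize (binI op) c) :=
  rfl

theorem apply_realize_binI_prod (a : ℕ → A × A) (t : Tm BinF) :
    g (t.realize (binI fun p q => (g p, g q)) a) =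
      t.realize (binI fun x y => g (x, y)) fun i => g (a i) := by
  induction t with
  | var i => rfl
  | func c ts ih =>
    cases c
    rw [Tm.func_eq_fapp, realize_fapp_binI, realize_fapp_binI, ih 0, ih 1]

theorem realize_fapp_binI_prod (a : ℕ → A × A) (s t : Tm BinF) :
    (fapp s t).realize (binI fun p q => (g p, g q)) a =
      (s.realize (binI fun x y => g (x, y)) fun i => g (a i),
        t.realize (binI fun x y => g (x, y)) fun i => g (a i)) := by
  rw [realize_fapp_binI, apply_realize_binI_prod g, apply_realize_binI_prod g]

theorem FR_binI_prod_subset_FRPairs {b : ℕ → A × A} {d : ℕ → A}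
    (hb : ∀ i, b i = (d (2 * i), d (2 * i + 1))) :
    FR (binI fun p q => (g p, g q)) b ⊆ FRPairs (binI fun x y => g (x, y)) d := by
  rintro _ ⟨t, ht, rfl⟩
  cases t with
  | var i =>
    exact ⟨.var (2 * i), .var (2 * i + 1), Tm.orderly_var _, Tm.orderly_var _,
      by simp [Tm.VarsLT], hb i⟩
  | func c ts =>
    cases c
    rw [Tm.func_eq_fapp] at ht ⊢
    obtain ⟨h0, h1, h01⟩ := Tm.orderly_fapp_iff.1 ht
    have hτ : Tm.Admissible (Tm.pairUp fun j => .var j) :=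
      (Tm.admissible_var strictMono_id).pairUp
    have hgb : ∀ i, g (b i) = (Tm.pairUp (fun j => .var j) i).realize (binI fun x y => g (x, y)) d :=
      fun i => by rw [hb]; rfl
    refine ⟨_, _, h0.subst hτ, h1.subst hτ, h01.subst hτ, ?_⟩
    rw [realize_fapp_binI_prod, Tm.realize_eq_realize_subst _ hgb,
      Tm.realize_eq_realize_subst _ hgb]

theorem RamseyAlg.prod (hg : RamseyAlg (binI fun x y => g (x, y))) :
    RamseyAlg (binI fun p q : A × A => (g p, g q)) := by
  intro a X
  obtain ⟨d, ⟨w, hw, hdw⟩, hd⟩ := hg.exists_FRPairs_homogeneous X fun i => g (a i)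
  let b i := (Tm.pairUp w i).realize (binI fun p q : A × A => (g p, g q)) a
  have hFR : FR _ b ⊆ FRPairs _ d := FR_binI_prod_subset_FRPairs g fun i => by
    simp only [b, Tm.pairUp, realize_fapp_binI_prod, hdw]
  exact ⟨b, ⟨_, hw.pairUp, fun i => rfl⟩,
    hd.imp hFR.trans (Set.subset_eq_empty (Set.inter_subset_inter_left _ hFR))⟩

end Product

/-- If `(A, g)` is a Ramsey algebra, then so is `(A × A, h)`
where `h((x₁,y₁),(x₂,y₂)) = (g(x₁,y₁), g(x₂,y₂))`. -/
theorem product_algebra_ramsey {A : Type v} (g : A × A → A)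
    (h : (A × A) × (A × A) → A × A)
    (hh : ∀ x₁ y₁ x₂ y₂ : A, h ((x₁, y₁), (x₂, y₂)) = (g (x₁, y₁), g (x₂, y₂)))
    (hg : RamseyAlg (binI fun x y => g (x, y))) :
    RamseyAlg (binI fun p q => h (p, q)) := by
  have hh' : (fun p q => h (p, q)) = fun p q : A × A => (g p, g q) :=
    funext₂ fun p q => hh p.1 p.2 q.1 q.2
  rw [hh']
  exact hg.prod g
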